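/- Let N ≥ 1, let ρ : ℝ × ℝ^N → ℝ and u : ℝ × ℝ^N → ℝ^N be of class C², and let f : ℝ → ℝ be of class C². Suppose the mass equation holds pointwise: ∂_t ρ + Σ_k ∂_k(ρ u_k) = 0 on ℝ × ℝ^N. Then for every index j and every (t,x), ∂_t(∂_j(f∘ρ))(t,x) + ∂_j( f'(ρ)·ρ·div u + Σ_k u_k ∂_k(f∘ρ) )(t,x) = 0, where div u := Σ_k ∂_k u_k and all ∂_j, ∂_k are spatial derivatives; that is, ∂_t ∇(f(ρ)) + ∇( f'(ρ)ρ div u + u·∇f(ρ) ) = 0. -/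

import Mathlib

open scoped BigOperators

/-! The continuity equation together with the chain and product rules gives the
renormalized equation `∂ₜ f(ρ) + f'(ρ) ρ div u + u · ∇f(ρ) = 0` pointwise; differentiating
it in `x_j` and exchanging `∂ₜ` with `∂_j` (Schwarz, for the `C²` function `f ∘ ρ` on
`ℝ × ℝ^N`) gives the identity.
-/

/-- Partial derivative in the `i`-th coordinate direction on `ℝ^N`. -/
noncomputable def pd {N : ℕ} (i : Fin N) (f : (Fin N → ℝ) → ℝ) :
    (Fin N → ℝ) → ℝ :=
  fun x => fderiv ℝ f x (Pi.single i 1)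

/-- Matrix-valued curl of a vector field: `(curl w)_{ij} = ∂_i w_j − ∂_j w_i`. -/
noncomputable def curlM {N : ℕ} (w : (Fin N → ℝ) → Fin N → ℝ) (i j : Fin N) :
    (Fin N → ℝ) → ℝ :=
  fun x => pd i (fun y => w y j) x - pd j (fun y => w y i) x

section SpaceTime

variable {E G : Type*} [NormedAddCommGroup E] [NormedSpace ℝ E]
  [NormedAddCommGroup G] [NormedSpace ℝ G]

theorem fderiv_slice_apply {F : ℝ × E → G} {t : ℝ} {x : E}
    (hF : DifferentiableAt ℝ F (t, x)) (v : E) :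
    fderiv ℝ (fun y => F (t, y)) x v = fderiv ℝ F (t, x) (0, v) :=
  congrArg (fun L => L v) (hF.hasFDerivAt.comp x (hasFDerivAt_prodMk_right t x)).fderiv

theorem deriv_slice {F : ℝ × E → G} {t : ℝ} {x : E}
    (hF : DifferentiableAt ℝ F (t, x)) :
    deriv (fun s => F (s, x)) t = fderiv ℝ F (t, x) (1, 0) := by
  exact (hF.hasFDerivAt.comp t (hasFDerivAt_prodMk_left t x)).hasDerivAt.deriv

theorem deriv_fderiv_slice_comm {F : ℝ × E → G} (hF : ContDiff ℝ 2 F) (t : ℝ) (x v : E) :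
    deriv (fun s => fderiv ℝ (fun y => F (s, y)) x v) t
      = fderiv ℝ (fun y => deriv (fun s => F (s, y)) t) x v := by
  have hF₁ : Differentiable ℝ F := hF.differentiable two_ne_zero
  have hDF : Differentiable ℝ (fderiv ℝ F) :=
    (hF.fderiv_right (m := 1) (by norm_num)).differentiable one_ne_zero
  have hDF_apply : ∀ p w q,
      fderiv ℝ (fun p => fderiv ℝ F p w) p q = fderiv ℝ (fderiv ℝ F) p q w :=
    fun p w q => by simp [fderiv_clm_apply (hDF p) (differentiableAt_const w)]
  have hDF_diff : ∀ w p, DifferentiableAt ℝ (fun p => fderiv ℝ F p w) p :=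
    fun w p => (hDF p).clm_apply (differentiableAt_const w)
  simp only [fderiv_slice_apply (hF₁ _), deriv_slice (hF₁ _)]
  rw [deriv_slice (hDF_diff _ _), fderiv_slice_apply (hDF_diff _ _), hDF_apply, hDF_apply,
    (hF.contDiffAt.isSymmSndFDerivAt (by simp)).eq]

end SpaceTime

section Renormalization

variable {N : ℕ}

theorem pd_mul {g h : (Fin N → ℝ) → ℝ} {x : Fin N → ℝ}
    (hg : DifferentiableAt ℝ g x) (hh : DifferentiableAt ℝ h x) (j : Fin N) :
    pd j (fun y => g y * h y) x = g x * pd j h x + h x * pd j g x := by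
  simp [pd, fderiv_fun_mul hg hh]

theorem pd_comp {f : ℝ → ℝ} {g : (Fin N → ℝ) → ℝ} {x : Fin N → ℝ}
    (hf : DifferentiableAt ℝ f (g x)) (hg : DifferentiableAt ℝ g x) (j : Fin N) :
    pd j (fun y => f (g y)) x = deriv f (g x) * pd j g x := by
  change fderiv ℝ (f ∘ g) x _ = _ * fderiv ℝ g x _
  rw [(hf.hasDerivAt.comp_hasFDerivAt x hg.hasFDerivAt).fderiv]
  rfl

theorem pd_neg (g : (Fin N → ℝ) → ℝ) (x : Fin N → ℝ) (j : Fin N) :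
    pd j (fun y => -g y) x = -pd j g x := by
  simp [pd]

theorem renormalized_flux_eq_neg_deriv {ρ : ℝ → (Fin N → ℝ) → ℝ}
    {u : ℝ → (Fin N → ℝ) → Fin N → ℝ} {f : ℝ → ℝ} {t : ℝ} {y : Fin N → ℝ}
    (hf : DifferentiableAt ℝ f (ρ t y)) (hρt : DifferentiableAt ℝ (fun s => ρ s y) t)
    (hρx : DifferentiableAt ℝ (fun z => ρ t z) y)
    (hu : ∀ k, DifferentiableAt ℝ (fun z => u t z k) y)
    (hmass : deriv (fun s => ρ s y) t + ∑ k : Fin N, pd k (fun z => ρ t z * u t z k) y = 0) :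
    deriv f (ρ t y) * ρ t y * (∑ k : Fin N, pd k (fun z => u t z k) y)
        + ∑ k : Fin N, u t y k * pd k (fun z => f (ρ t z)) y
      = -deriv (fun s => f (ρ s y)) t := by
  have hchain : deriv (fun s => f (ρ s y)) t = deriv f (ρ t y) * deriv (fun s => ρ s y) t :=
    deriv_comp t hf hρt
  have hflux : ∑ k : Fin N, u t y k * pd k (fun z => f (ρ t z)) y
      = deriv f (ρ t y) * ∑ k : Fin N, u t y k * pd k (fun z => ρ t z) y := by
    rw [Finset.mul_sum]
    exact Finset.sum_congr rfl fun k _ => by rw [pd_comp hf hρx]; ring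
  simp only [pd_mul hρx (hu _), Finset.sum_add_distrib, ← Finset.mul_sum] at hmass
  rw [hflux, hchain]
  linear_combination deriv f (ρ t y) * hmass

end Renormalization

theorem time_derivative_grad_f_rho_general (N : ℕ)
    (ρ : ℝ → (Fin N → ℝ) → ℝ) (u : ℝ → (Fin N → ℝ) → Fin N → ℝ)
    (hρ : ContDiff ℝ 2 (fun p : ℝ × (Fin N → ℝ) => ρ p.1 p.2))
    (hu : ContDiff ℝ 2 (fun p : ℝ × (Fin N → ℝ) => u p.1 p.2))
    (f : ℝ → ℝ) (hf : ContDiff ℝ 2 f)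
    (hmass : ∀ t x, deriv (fun s => ρ s x) t
        + ∑ k : Fin N, pd k (fun y => ρ t y * u t y k) x = 0) :
    ∀ (j : Fin N) (t : ℝ) (x : Fin N → ℝ),
      deriv (fun s => pd j (fun y => f (ρ s y)) x) t
        + pd j (fun y =>
            deriv f (ρ t y) * ρ t y * (∑ k : Fin N, pd k (fun z => u t z k) y)
              + ∑ k : Fin N, u t y k * pd k (fun z => f (ρ t z)) y) x = 0 := by
  intro j t x
  have hρ₁ := hρ.differentiable two_ne_zero
  have hu₁ := hu.differentiable two_ne_zero
  have hflux : (fun y => deriv f (ρ t y) * ρ t y * (∑ k : Fin N, pd k (fun z => u t z k) y)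
      + ∑ k : Fin N, u t y k * pd k (fun z => f (ρ t z)) y)
      = fun y => -deriv (fun s => f (ρ s y)) t := by
    funext y
    exact renormalized_flux_eq_neg_deriv (hf.differentiable two_ne_zero _)
      (hρ₁.comp (differentiable_id.prodMk (differentiable_const y)) t)
      (hρ₁.comp ((differentiable_const t).prodMk differentiable_id) y)
      (fun k => (differentiable_pi.mp
        (hu₁.comp ((differentiable_const t).prodMk differentiable_id)) k) y)
      (hmass t y)
  rw [hflux, pd_neg]
  exact add_neg_eq_zero.mpr (deriv_fderiv_slice_comm (hf.comp hρ) t x _)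

/-- From the continuity equation, ∂_t ∇(f(ρ)) + ∇(f'(ρ)ρ div u + u·∇f(ρ)) = 0. -/
theorem time_derivative_grad_f_rho (N : ℕ) (hN : 1 ≤ N)
    (ρ : ℝ → (Fin N → ℝ) → ℝ) (u : ℝ → (Fin N → ℝ) → Fin N → ℝ)
    (hρ : ContDiff ℝ 2 (fun p : ℝ × (Fin N → ℝ) => ρ p.1 p.2))
    (hu : ContDiff ℝ 2 (fun p : ℝ × (Fin N → ℝ) => u p.1 p.2))
    (f : ℝ → ℝ) (hf : ContDiff ℝ 2 f)
    (hmass : ∀ t x, deriv (fun s => ρ s x) t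
        + ∑ k : Fin N, pd k (fun y => ρ t y * u t y k) x = 0) :
    ∀ (j : Fin N) (t : ℝ) (x : Fin N → ℝ),
      deriv (fun s => pd j (fun y => f (ρ s y)) x) t
        + pd j (fun y =>
            deriv f (ρ t y) * ρ t y * (∑ k : Fin N, pd k (fun z => u t z k) y)
              + ∑ k : Fin N, u t y k * pd k (fun z => f (ρ t z)) y) x = 0 :=
  time_derivative_grad_f_rho_general N ρ u hρ hu f hf hmass
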